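/- Let P and Q be polytopes in ℝ^d and let u and v be two distinct vertices of P. Then u and v are adjacent in the graph of P if and only if there exist a vertex of Γ_{P,Q}(u) and a vertex of Γ_{P,Q}(v) that are adjacent in the graph of P + Q. -/

import Mathlib

/-! The face of `P + Q` in direction `c` is `F_P(c) + F_Q(c)`, and `p + q` (with `p ∈ P`,
`q ∈ Q`) lies in it exactly when `p ∈ F_P(c)` and `q ∈ F_Q(c)`. So if `F_{P+Q}(c)` is the edge
`[u + q₁, v + q₂]`, then `F_P(c)` lies on a line and contains the vertices `u ≠ v` of `P`, which
forces `F_P(c) = [u, v]`. Conversely, if `F_P(c) = [u, v]`, pick `c'` orthogonal to `v - u` such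
that `F_Q(c)` exposes in direction `c'` a segment `[q, q + τ (v - u)]` with `τ ≥ 0`. For small
`ε > 0` the face of `P + Q` in direction `c + ε c'` is the face of `[u, v] + F_Q(c)` in direction
`c'`, namely the edge `[u + q, v + q + τ (v - u)]`. -/

open Pointwise
open scoped RealInnerProductSpace

noncomputable section

abbrev Esp (d : ℕ) := EuclideanSpace ℝ (Fin d)

def IsPolytope {d : ℕ} (P : Set (Esp d)) : Prop :=
  ∃ s : Finset (Esp d), s.Nonempty ∧ P = convexHull ℝ (s : Set (Esp d))

def polyFace {d : ℕ} (P : Set (Esp d)) (c : Esp d) : Set (Esp d) :=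
  {x | x ∈ P ∧ ∀ y ∈ P, ⟪c, x⟫ ≤ ⟪c, y⟫}

def polyVerts {d : ℕ} (P : Set (Esp d)) : Set (Esp d) :=
  Set.extremePoints ℝ P

def f0 {d : ℕ} (P : Set (Esp d)) : ℕ := (polyVerts P).ncard

def polyAdj {d : ℕ} (P : Set (Esp d)) (u v : Esp d) : Prop :=
  u ≠ v ∧ u ∈ polyVerts P ∧ v ∈ polyVerts P ∧
    ∃ c : Esp d, polyFace P c = segment ℝ u v

def polyGraph {d : ℕ} (P : Set (Esp d)) : SimpleGraph (Esp d) where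
  Adj u v := polyAdj P u v
  symm := by
    constructor
    rintro u v ⟨hne, hu, hv, c, hc⟩
    exact ⟨hne.symm, hv, hu, c, by rw [hc, segment_symm]⟩
  loopless := by constructor; rintro u ⟨hne, -⟩; exact hne rfl

def polyDiam {d : ℕ} (P : Set (Esp d)) : ℕ :=
  sSup {n : ℕ | ∃ u ∈ polyVerts P, ∃ v ∈ polyVerts P, n = (polyGraph P).dist u v}

def polyDim {d : ℕ} (P : Set (Esp d)) : ℕ :=
  Module.finrank ℝ (affineSpan ℝ P).direction

def IsFace {d : ℕ} (P F : Set (Esp d)) : Prop := ∃ c : Esp d, polyFace P c = F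

def gammaVerts {d : ℕ} (P Q : Set (Esp d)) (u : Esp d) : Set (Esp d) :=
  {w ∈ polyVerts (P + Q) | ∃ v ∈ polyVerts Q, w = u + v}

open Set Filter
open scoped Topology

section Segment

variable {E : Type*} [AddCommGroup E] [Module ℝ E]

theorem left_mem_extremePoints_segment (x y : E) : x ∈ (segment ℝ x y).extremePoints ℝ := by
  refine mem_extremePoints_iff_forall_segment.2 ⟨left_mem_segment ℝ x y, fun a ha b hb hx => ?_⟩
  rw [mem_segment_iff_wbtw] at ha hb hx
  have hab : SameRay ℝ (a -ᵥ x) (b -ᵥ x) :=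
    ha.sameRay_vsub_left.trans hb.sameRay_vsub_left.symm fun hyx => by
      rw [vsub_eq_zero_iff_eq] at hyx
      subst hyx
      exact Or.inl (vsub_eq_zero_iff_eq.2 ((wbtw_self_iff ℝ).1 ha))
  rcases wbtw_total_of_sameRay_vsub_left hab with h | h
  · exact Or.inl (h.swap_left_iff.1 hx).symm
  · exact Or.inr (h.swap_left_iff.1 hx.symm).symm

theorem right_mem_extremePoints_segment (x y : E) : y ∈ (segment ℝ x y).extremePoints ℝ := by
  rw [segment_symm]
  exact left_mem_extremePoints_segment y x

theorem subset_segment_of_subset_affineSpan_pair {A F : Set E} {a b u v : E} (hFA : F ⊆ A)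
    (hF : F ⊆ line[ℝ, a, b]) (hu : u ∈ A.extremePoints ℝ) (hv : v ∈ A.extremePoints ℝ)
    (huF : u ∈ F) (hvF : v ∈ F) (huv : u ≠ v) : F ⊆ segment ℝ u v := by
  intro z hz
  rcases (collinear_triple_of_mem_affineSpan_pair (hF huF) (hF hz) (hF hvF)).wbtw_or_wbtw_or_wbtw
    with h | h | h
  · exact mem_segment_iff_wbtw.2 h
  · rcases (mem_extremePoints_iff_forall_segment.1 hv).2 z (hFA hz) u (hFA huF)
      (mem_segment_iff_wbtw.2 h) with rfl | rfl
    · exact right_mem_segment ℝ u z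
    · exact absurd rfl huv
  · rcases (mem_extremePoints_iff_forall_segment.1 hu).2 v (hFA hvF) z (hFA hz)
      (mem_segment_iff_wbtw.2 h) with rfl | rfl
    · exact absurd rfl huv
    · exact left_mem_segment ℝ z v

theorem segment_add_segment_of_smul (a b e : E) {α β : ℝ} (hα : 0 ≤ α) (hβ : 0 ≤ β) :
    segment ℝ a (a + α • e) + segment ℝ b (b + β • e)
      = segment ℝ (a + b) (a + b + (α + β) • e) := by
  have key : ∀ (x : E) (γ : ℝ), segment ℝ x (x + γ • e) = x +ᵥ γ • segment ℝ 0 e := by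
    intro x γ
    rw [← convexHull_pair, ← convexHull_pair, ← convexHull_smul, ← convexHull_vadd]
    simp [smul_set_insert, vadd_set_insert]
  rw [key, key, key, Convex.add_smul (convex_segment _ _) hα hβ, vadd_add_vadd]

theorem Set.Finite.exists_convexHull_eq_segment {s : Set E} (hs : s.Finite) (hne : s.Nonempty)
    {e : E} (he : e ≠ 0) (hline : ∀ x ∈ s, ∀ y ∈ s, x - y ∈ ℝ ∙ e) :
    ∃ q : E, ∃ τ : ℝ, 0 ≤ τ ∧ convexHull ℝ s = segment ℝ q (q + τ • e) := by
  obtain ⟨q₀, hq₀⟩ := hne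
  let φ : ℝ →ᵃ[ℝ] E := AffineMap.lineMap q₀ (q₀ + e)
  have hφ : ∀ r : ℝ, φ r = q₀ + r • e := fun r => by
    simp [φ, AffineMap.lineMap_apply_module', add_comm]
  have hφinj : Function.Injective φ :=
    AffineMap.lineMap_injective ℝ (by simpa using he)
  have hsφ : φ '' (φ ⁻¹' s) = s := by
    refine image_preimage_eq_of_subset fun x hx => ?_
    obtain ⟨r, hr⟩ := Submodule.mem_span_singleton.1 (hline x hx q₀ hq₀)
    exact ⟨r, by rw [hφ, hr, add_sub_cancel]⟩
  set T := φ ⁻¹' s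
  have hT : T.Finite := hs.preimage hφinj.injOn
  have hTne : T.Nonempty := ⟨0, by simpa [T, hφ] using hq₀⟩
  obtain ⟨a, ha, hamin⟩ := exists_min_image T id hT hTne
  obtain ⟨b, hb, hbmax⟩ := exists_max_image T id hT hTne
  have hconvT : convexHull ℝ T = segment ℝ a b :=
    (convexHull_min (fun r hr => (segment_eq_Icc (hamin b hb)).symm ▸ ⟨hamin r hr, hbmax r hr⟩)
      (convex_segment a b)).antisymm (segment_subset_convexHull ha hb)
  refine ⟨φ a, b - a, sub_nonneg.2 (hamin b hb), ?_⟩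
  rw [← hsφ, ← AffineMap.image_convexHull, hconvT, image_segment, hφ, hφ]
  congr 1
  module

end Segment

section Faces

variable {d : ℕ}

theorem isExposed_polyFace (P : Set (Esp d)) (c : Esp d) : IsExposed ℝ P (polyFace P c) :=
  fun _ => ⟨-innerSL ℝ c, by ext x; simp [polyFace]⟩

theorem polyFace_subset (P : Set (Esp d)) (c : Esp d) : polyFace P c ⊆ P :=
  fun _ hx => hx.1

theorem Set.Finite.polyFace_nonempty {s : Set (Esp d)} (hs : s.Finite) (hne : s.Nonempty)
    (c : Esp d) : (polyFace s c).Nonempty :=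
  let ⟨x, hx, hmin⟩ := exists_min_image s (fun y => ⟪c, y⟫) hs hne
  ⟨x, hx, hmin⟩

theorem add_mem_polyFace_add_iff {P Q : Set (Esp d)} {c p q : Esp d} (hp : p ∈ P) (hq : q ∈ Q) :
    p + q ∈ polyFace (P + Q) c ↔ p ∈ polyFace P c ∧ q ∈ polyFace Q c := by
  constructor
  · rintro ⟨-, hmin⟩
    refine ⟨⟨hp, fun y hy => ?_⟩, ⟨hq, fun y hy => ?_⟩⟩
    · simpa [inner_add_right] using hmin (y + q) (add_mem_add hy hq)
    · simpa [inner_add_right] using hmin (p + y) (add_mem_add hp hy)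
  · rintro ⟨⟨-, hpmin⟩, ⟨-, hqmin⟩⟩
    refine ⟨add_mem_add hp hq, ?_⟩
    rintro _ ⟨y, hy, z, hz, rfl⟩
    rw [inner_add_right, inner_add_right]
    exact add_le_add (hpmin y hy) (hqmin z hz)

theorem polyFace_add (P Q : Set (Esp d)) (c : Esp d) :
    polyFace (P + Q) c = polyFace P c + polyFace Q c := by
  ext z
  constructor
  · intro hz
    obtain ⟨p, hp, q, hq, rfl⟩ := hz.1
    obtain ⟨hp', hq'⟩ := (add_mem_polyFace_add_iff hp hq).1 hz
    exact add_mem_add hp' hq'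
  · rintro ⟨p, hp, q, hq, rfl⟩
    exact (add_mem_polyFace_add_iff hp.1 hq.1).2 ⟨hp, hq⟩

theorem polyFace_convexHull {s : Set (Esp d)} (hs : s.Finite) (c : Esp d) :
    polyFace (convexHull ℝ s) c = convexHull ℝ (polyFace s c) := by
  have hexp := isExposed_polyFace (convexHull ℝ s) c
  have hconv := hexp.convex (convex_convexHull ℝ s)
  apply Subset.antisymm
  · rw [← closure_convexHull_extremePoints (hexp.isCompact (hs.isCompact_convexHull ℝ)) hconv]
    refine closure_minimal (convexHull_mono fun x hx => ?_)
      ((hs.subset (polyFace_subset s c)).isClosed_convexHull ℝ)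
    rw [hexp.isExtreme.extremePoints_eq] at hx
    exact ⟨extremePoints_convexHull_subset hx.2, fun y hy => hx.1.2 y (subset_convexHull ℝ s hy)⟩
  · refine convexHull_min (fun x hx => ⟨subset_convexHull ℝ s hx.1, ?_⟩) hconv
    exact convexHull_min hx.2 (convex_halfSpace_ge (𝕜 := ℝ) (innerₛₗ ℝ c).isLinear _)

theorem Set.Finite.exists_pos_polyFace_add_smul {s : Set (Esp d)} (hs : s.Finite)
    (c c' : Esp d) : ∃ ε : ℝ, 0 < ε ∧ polyFace s (c + ε • c') = polyFace (polyFace s c) c' := by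
  have hinner : ∀ (ε : ℝ) (y : Esp d), ⟪c + ε • c', y⟫ = ⟪c, y⟫ + ε * ⟪c', y⟫ := fun ε y => by
    rw [inner_add_left, real_inner_smul_left]
  have hev : ∀ᶠ ε in 𝓝[>] (0 : ℝ), ∀ x ∈ s, ∀ y ∈ s,
      ⟪c, x⟫ < ⟪c, y⟫ → ⟪c + ε • c', x⟫ < ⟪c + ε • c', y⟫ := by
    refine nhdsWithin_le_nhds ((hs.eventually_all).2 fun x _ => (hs.eventually_all).2 fun y _ => ?_)
    by_cases hxy : ⟪c, x⟫ < ⟪c, y⟫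
    · have hlt : ∀ᶠ ε in 𝓝 (0 : ℝ), ⟪c, x⟫ + ε * ⟪c', x⟫ < ⟪c, y⟫ + ε * ⟪c', y⟫ :=
        ContinuousAt.eventually_lt (by fun_prop) (by fun_prop) (by simpa using hxy)
      exact hlt.mono fun ε h _ => by rwa [hinner, hinner]
    · exact Eventually.of_forall fun ε h => absurd h hxy
  obtain ⟨ε, hε, hεpos⟩ := (hev.and self_mem_nhdsWithin).exists
  refine ⟨ε, hεpos, Subset.antisymm (fun x ⟨hx, hmin⟩ => ?_) (fun x ⟨hxc, hmin⟩ => ?_)⟩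
  · have hxc : x ∈ polyFace s c :=
      ⟨hx, fun y hy => not_lt.1 fun hlt => (hmin y hy).not_gt (hε y hy x hx hlt)⟩
    refine ⟨hxc, fun y hy => le_of_mul_le_mul_left ?_ hεpos⟩
    have := hmin y hy.1
    rw [hinner, hinner, le_antisymm (hxc.2 y hy.1) (hy.2 x hx)] at this
    linarith
  · refine ⟨hxc.1, fun y hy => ?_⟩
    rcases (hxc.2 y hy).lt_or_eq with hlt | heq
    · exact (hε x hxc.1 y hy hlt).le
    · have hyc : y ∈ polyFace s c := ⟨hy, fun z hz => heq ▸ hxc.2 z hz⟩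
      rw [hinner, hinner, heq]
      gcongr
      exact hmin y hyc

theorem polyFace_segment_of_inner_sub_eq_zero {u v c : Esp d} (h : ⟪c, v - u⟫ = 0) :
    polyFace (segment ℝ u v) c = segment ℝ u v := by
  have hconst : ∀ x ∈ segment ℝ u v, ⟪c, x⟫ = ⟪c, u⟫ := by
    rintro x hx
    rw [segment_eq_image'] at hx
    obtain ⟨θ, -, rfl⟩ := hx
    rw [inner_add_right, inner_smul_right, h, mul_zero, add_zero]
  exact (polyFace_subset _ c).antisymm fun x hx =>
    ⟨hx, fun y hy => ((hconst x hx).trans (hconst y hy).symm).le⟩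

theorem mem_polyVerts_of_polyFace_eq_segment {P : Set (Esp d)} {c x y : Esp d}
    (h : polyFace P c = segment ℝ x y) : x ∈ polyVerts P ∧ y ∈ polyVerts P := by
  have hext : IsExtreme ℝ P (segment ℝ x y) := h ▸ (isExposed_polyFace P c).isExtreme
  exact ⟨hext.extremePoints_subset_extremePoints (left_mem_extremePoints_segment x y),
    hext.extremePoints_subset_extremePoints (right_mem_extremePoints_segment x y)⟩

theorem isPolytope_polyFace {P : Set (Esp d)} (hP : IsPolytope P) (c : Esp d) :
    IsPolytope (polyFace P c) := by
  obtain ⟨s, hs, rfl⟩ := hP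
  have hfin := s.finite_toSet.subset (polyFace_subset (s : Set (Esp d)) c)
  refine ⟨hfin.toFinset, ?_, by rw [Finite.coe_toFinset, polyFace_convexHull s.finite_toSet]⟩
  simpa using s.finite_toSet.polyFace_nonempty hs c

end Faces

namespace IsPolytope

variable {d : ℕ} {P Q : Set (Esp d)}

theorem add (hP : IsPolytope P) (hQ : IsPolytope Q) : IsPolytope (P + Q) := by
  obtain ⟨s, hs, rfl⟩ := hP
  obtain ⟨t, ht, rfl⟩ := hQ
  exact ⟨s + t, hs.add ht, by rw [Finset.coe_add, convexHull_add]⟩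

theorem exists_pos_polyFace_add_smul (hP : IsPolytope P) (c c' : Esp d) :
    ∃ ε : ℝ, 0 < ε ∧ polyFace P (c + ε • c') = polyFace (polyFace P c) c' := by
  obtain ⟨s, -, rfl⟩ := hP
  have hs := s.finite_toSet
  obtain ⟨ε, hε, h⟩ := hs.exists_pos_polyFace_add_smul c c'
  refine ⟨ε, hε, ?_⟩
  rw [polyFace_convexHull hs, h, polyFace_convexHull hs,
    polyFace_convexHull (hs.subset (polyFace_subset _ c))]

theorem exists_polyFace_eq_segment (hP : IsPolytope P) {e : Esp d} (he : e ≠ 0) :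
    ∃ c : Esp d, ⟪c, e⟫ = 0 ∧
      ∃ q : Esp d, ∃ τ : ℝ, 0 ≤ τ ∧ polyFace P c = segment ℝ q (q + τ • e) := by
  obtain ⟨t, htne, rfl⟩ := hP
  have ht := t.finite_toSet
  set K := (ℝ ∙ e)ᗮ
  -- `c` is chosen off the finitely many hyperplanes of `K` orthogonal to a difference of two
  -- points of `t` that is not parallel to `e`
  let D := ((t : Set (Esp d)) - t) \ (ℝ ∙ e)
  have : Finite D := ((ht.sub ht).sdiff).to_subtype
  obtain ⟨c, hcK, hc⟩ := Module.Dual.exists_forall_mem_ne_zero_of_forall_exists K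
    (fun w : D => innerₛₗ ℝ (w : Esp d)) fun w => by
      by_contra! h
      have hw : (w : Esp d) ∈ Kᗮ := (Submodule.mem_orthogonal' _ _).2 h
      rw [Submodule.orthogonal_orthogonal] at hw
      exact w.2.2 hw
  have hline : ∀ x ∈ polyFace t c, ∀ y ∈ polyFace t c, x - y ∈ ℝ ∙ e := by
    intro x hx y hy
    by_contra hxy
    refine hc ⟨x - y, sub_mem_sub hx.1 hy.1, hxy⟩ ?_
    simp [real_inner_comm, le_antisymm (hx.2 y hy.1) (hy.2 x hx.1)]
  obtain ⟨q, τ, hτ, hseg⟩ := (ht.subset (polyFace_subset _ c)).exists_convexHull_eq_segment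
    (ht.polyFace_nonempty htne c) he hline
  refine ⟨c, ?_, q, τ, hτ, by rw [polyFace_convexHull ht, hseg]⟩
  rw [real_inner_comm]
  exact Submodule.mem_orthogonal_singleton_iff_inner_right.1 hcK

end IsPolytope

section Adjacency

variable {d : ℕ} {P Q : Set (Esp d)} {u v : Esp d}

theorem exists_polyAdj_add_of_polyAdj (hP : IsPolytope P) (hQ : IsPolytope Q)
    (hadj : polyAdj P u v) :
    ∃ w₁ ∈ gammaVerts P Q u, ∃ w₂ ∈ gammaVerts P Q v, polyAdj (P + Q) w₁ w₂ := by
  obtain ⟨huv, -, -, c, hc⟩ := hadj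
  have he : v - u ≠ 0 := sub_ne_zero.2 huv.symm
  obtain ⟨c', hc'e, q, τ, hτ, hq⟩ := (isPolytope_polyFace hQ c).exists_polyFace_eq_segment he
  obtain ⟨ε, -, hε⟩ := (hP.add hQ).exists_pos_polyFace_add_smul c c'
  have huv' : segment ℝ u v = segment ℝ u (u + (1 : ℝ) • (v - u)) := by
    rw [one_smul, add_sub_cancel]
  have hedge : polyFace (P + Q) (c + ε • c') = segment ℝ (u + q) (v + (q + τ • (v - u))) := by
    rw [hε, polyFace_add, hc, polyFace_add, polyFace_segment_of_inner_sub_eq_zero hc'e, hq, huv',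
      segment_add_segment_of_smul _ _ _ zero_le_one hτ]
    congr 1
    module
  have hne : u + q ≠ v + (q + τ • (v - u)) := by
    intro h
    have h' : v + (q + τ • (v - u)) - (u + q) = (1 + τ) • (v - u) := by module
    rw [← h, sub_self, eq_comm, smul_eq_zero] at h'
    exact h'.elim (by positivity) he
  obtain ⟨hw₁, hw₂⟩ := mem_polyVerts_of_polyFace_eq_segment hedge
  obtain ⟨hq₁, hq₂⟩ := mem_polyVerts_of_polyFace_eq_segment hq
  have hQc := (isExposed_polyFace Q c).isExtreme
  exact ⟨_, ⟨hw₁, q, hQc.extremePoints_subset_extremePoints hq₁, rfl⟩,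
    _, ⟨hw₂, _, hQc.extremePoints_subset_extremePoints hq₂, rfl⟩, hne, hw₁, hw₂, _, hedge⟩

theorem polyAdj_of_polyAdj_add (hP : Convex ℝ P) (hu : u ∈ polyVerts P) (hv : v ∈ polyVerts P)
    (huv : u ≠ v) {q₁ q₂ : Esp d} (hq₁ : q₁ ∈ Q) (hq₂ : q₂ ∈ Q)
    (hadj : polyAdj (P + Q) (u + q₁) (v + q₂)) : polyAdj P u v := by
  obtain ⟨-, -, -, c, hc⟩ := hadj
  obtain ⟨huF, hq₁F⟩ := (add_mem_polyFace_add_iff hu.1 hq₁).1 (hc ▸ left_mem_segment ℝ _ _)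
  obtain ⟨hvF, -⟩ := (add_mem_polyFace_add_iff hv.1 hq₂).1 (hc ▸ right_mem_segment ℝ _ _)
  have hline : polyFace P c ⊆ line[ℝ, u, v + q₂ - q₁] := fun p hp => by
    have h := hc ▸ (add_mem_polyFace_add_iff hp.1 hq₁).2 ⟨hp, hq₁F⟩
    rw [add_comm p, add_comm u, show v + q₂ = q₁ + (v + q₂ - q₁) by abel,
      mem_segment_translate, ← affineSegment_eq_segment] at h
    exact affineSegment_subset_affineSpan ℝ _ _ h
  refine ⟨huv, hu, hv, c, Subset.antisymm ?_ ?_⟩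
  · exact subset_segment_of_subset_affineSpan_pair (polyFace_subset P c) hline hu hv huF hvF huv
  · exact ((isExposed_polyFace P c).convex hP).segment_subset huF hvF

end Adjacency

theorem stmt16 {d : ℕ} (P Q : Set (Esp d)) (hP : IsPolytope P) (hQ : IsPolytope Q)
    (u v : Esp d) (hu : u ∈ polyVerts P) (hv : v ∈ polyVerts P) (huv : u ≠ v) :
    polyAdj P u v ↔
      ∃ w₁ ∈ gammaVerts P Q u, ∃ w₂ ∈ gammaVerts P Q v, polyAdj (P + Q) w₁ w₂ := by
  refine ⟨exists_polyAdj_add_of_polyAdj hP hQ, ?_⟩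
  rintro ⟨_, ⟨-, q₁, hq₁, rfl⟩, _, ⟨-, q₂, hq₂, rfl⟩, hadj⟩
  obtain ⟨s, -, rfl⟩ := hP
  exact polyAdj_of_polyAdj_add (convex_convexHull ℝ _) hu hv huv hq₁.1 hq₂.1 hadj
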